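/- Let a, a' ∈ F, b' ∈ F^× and μ ∈ F^×. If ([1,a'] ⊥ b'·[1,a']) ⊥ μ·([1,a'] ⊥ b'·[1,a']) is isometric to 4×ℍ, then [1,a] ⊥ b'·[1,a'] ⊥ μ·[1,a'] ⊥ (μb')·[1,a'] ⊥ [1, a+a'] is isometric to 5×ℍ. -/

import Mathlib

/-!
In characteristic 2, `[1,a] ⊥ [1,b] ≃ ℍ ⊥ [1,a+b]`. Taking `b = a + a'` merges the first and
last summands into `ℍ ⊥ [1,a']`; since `(μb')·[1,a'] = μ·(b'·[1,a'])`, the remaining summands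
regroup into `ℍ ⊥ (([1,a'] ⊥ b'·[1,a']) ⊥ μ·([1,a'] ⊥ b'·[1,a']))`, which is `ℍ ⊥ 4×ℍ` by
hypothesis.
-/

/-- The binary quadratic form `[b₁,b₂] : (x,y) ↦ b₁x² + xy + b₂y²` on `F × F`. -/
def binQF (F : Type*) [Field F] (b₁ b₂ : F) : QuadraticForm F (F × F) :=
  LinearMap.BilinMap.toQuadraticMap (LinearMap.mk₂ F
    (fun p q : F × F => b₁ * (p.1 * q.1) + p.1 * q.2 + b₂ * (p.2 * q.2))
    (fun p p' q => by simp only [Prod.fst_add, Prod.snd_add]; ring)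
    (fun a p q => by simp only [Prod.smul_fst, Prod.smul_snd, smul_eq_mul]; ring)
    (fun p q q' => by simp only [Prod.fst_add, Prod.snd_add]; ring)
    (fun a p q => by simp only [Prod.smul_fst, Prod.smul_snd, smul_eq_mul]; ring))

namespace QuadraticMap

variable {R S M₁ M₂ M₃ M₄ M₅ P : Type*} [CommSemiring R] [AddCommMonoid P] [Module R P]
  [AddCommMonoid M₁] [AddCommMonoid M₂] [AddCommMonoid M₃] [AddCommMonoid M₄] [AddCommMonoid M₅]
  [Module R M₁] [Module R M₂] [Module R M₃] [Module R M₄] [Module R M₅]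

def IsometryEquiv.prodAssoc (Q₁ : QuadraticMap R M₁ P) (Q₂ : QuadraticMap R M₂ P)
    (Q₃ : QuadraticMap R M₃ P) :
    ((Q₁.prod Q₂).prod Q₃).IsometryEquiv (Q₁.prod (Q₂.prod Q₃)) where
  toLinearEquiv := LinearEquiv.prodAssoc R M₁ M₂ M₃
  map_app' _ := (add_assoc _ _ _).symm

theorem smul_prod [Monoid S] [DistribMulAction S P] [SMulCommClass S R P] (c : S)
    (Q₁ : QuadraticMap R M₁ P) (Q₂ : QuadraticMap R M₂ P) :
    c • Q₁.prod Q₂ = (c • Q₁).prod (c • Q₂) := by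
  ext; simp [smul_add]

theorem prod_prod_prod_prod_equivalent (Q₁ : QuadraticMap R M₁ P) (Q₂ : QuadraticMap R M₂ P)
    (Q₃ : QuadraticMap R M₃ P) (Q₄ : QuadraticMap R M₄ P) (Q₅ : QuadraticMap R M₅ P) :
    (Q₁.prod (Q₂.prod (Q₃.prod (Q₄.prod Q₅)))).Equivalent
      ((Q₁.prod Q₅).prod (Q₂.prod (Q₃.prod Q₄))) :=
  ⟨(IsometryEquiv.refl Q₁).prod
      (((IsometryEquiv.refl Q₂).prod (IsometryEquiv.prodAssoc Q₃ Q₄ Q₅).symm).trans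
        ((IsometryEquiv.prodAssoc Q₂ (Q₃.prod Q₄) Q₅).symm.trans (IsometryEquiv.prodComm _ _)))
    |>.trans (IsometryEquiv.prodAssoc _ _ _).symm⟩

def IsometryEquiv.piFinSucc {n : ℕ} {M : Fin (n + 1) → Type*} [∀ i, AddCommMonoid (M i)]
    [∀ i, Module R (M i)] (Q : ∀ i, QuadraticMap R (M i) P) :
    ((Q 0).prod (QuadraticMap.pi fun i : Fin n => Q i.succ)).IsometryEquiv
      (QuadraticMap.pi Q) where
  toLinearEquiv := Fin.consLinearEquiv R M
  map_app' x := by simp [pi_apply, Fin.sum_univ_succ]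

end QuadraticMap

open QuadraticMap

section

variable {F : Type*} [Field F]

theorem binQF_apply (b₁ b₂ : F) (p : F × F) :
    binQF F b₁ b₂ p = b₁ * (p.1 * p.1) + p.1 * p.2 + b₂ * (p.2 * p.2) := rfl

theorem binQF_one_prod_binQF_one_equivalent [CharP F 2] (a b : F) :
    ((binQF F 1 a).prod (binQF F 1 b)).Equivalent ((binQF F 0 0).prod (binQF F 1 (a + b))) := by
  let e : ((F × F) × (F × F)) ≃ₗ[F] ((F × F) × (F × F)) :=
    { toFun v := ((v.1.1 + a * (v.1.2 + v.2.2), v.1.2 + v.2.2), (v.2.1 + v.1.1, v.2.2))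
      invFun w := ((w.1.1 - a * w.1.2, w.1.2 - w.2.2), (w.2.1 - w.1.1 + a * w.1.2, w.2.2))
      map_add' _ _ := by ext <;> simp only [Prod.fst_add, Prod.snd_add] <;> ring
      map_smul' _ _ := by
        ext <;> simp only [Prod.smul_fst, Prod.smul_snd, smul_eq_mul, RingHom.id_apply] <;> ring
      left_inv _ := by ext <;> dsimp only <;> ring
      right_inv _ := by ext <;> dsimp only <;> ring }
  refine ⟨⟨e, fun v => ?_⟩⟩
  simp only [e, prod_apply, binQF_apply]
  -- the two sides differ by cross terms that all carry a factor 2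
  linear_combination (v.1.1 * v.2.1 + v.1.1 * v.2.2 + a * v.1.2 * v.2.2 + a * v.2.2 * v.2.2) *
    (CharTwo.two_eq_zero : (2 : F) = 0)

end

theorem stmt13_general (F : Type*) [Field F] [CharP F 2] (a a' b' mu : F)
    (hhyp : QuadraticMap.Equivalent
      (((binQF F 1 a').prod (b' • binQF F 1 a')).prod
        (mu • ((binQF F 1 a').prod (b' • binQF F 1 a'))))
      (QuadraticMap.pi (fun _ : Fin 4 => binQF F 0 0))) :
    QuadraticMap.Equivalent
      ((binQF F 1 a).prod ((b' • binQF F 1 a').prod ((mu • binQF F 1 a').prod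
        (((mu * b') • binQF F 1 a').prod (binQF F 1 (a + a'))))))
      (QuadraticMap.pi (fun _ : Fin 5 => binQF F 0 0)) := by
  set H := binQF F 0 0
  set K := binQF F 1 a'
  have hcancel : ((binQF F 1 a).prod (binQF F 1 (a + a'))).Equivalent (H.prod K) := by
    simpa [← add_assoc, CharTwo.add_self_eq_zero] using
      binQF_one_prod_binQF_one_equivalent a (a + a')
  have hscale : mu • K.prod (b' • K) = (mu • K).prod ((mu * b') • K) := by
    rw [smul_prod, smul_smul]
  rw [hscale] at hhyp
  refine (prod_prod_prod_prod_equivalent ..).trans <| (hcancel.prod (.refl _)).trans ?_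
  refine .trans ⟨(IsometryEquiv.prodAssoc _ _ _).trans
    ((QuadraticMap.IsometryEquiv.refl H).prod (IsometryEquiv.prodAssoc _ _ _).symm)⟩ ?_
  exact ((Equivalent.refl H).prod hhyp).trans ⟨IsometryEquiv.piFinSucc fun _ : Fin 5 => H⟩

/-- over a field of characteristic 2, if
`([1,a'] ⊥ b'·[1,a']) ⊥ μ·([1,a'] ⊥ b'·[1,a']) ≃ 4×ℍ`, then
`[1,a] ⊥ b'·[1,a'] ⊥ μ·[1,a'] ⊥ (μb')·[1,a'] ⊥ [1,a+a'] ≃ 5×ℍ`. -/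
theorem stmt13 (F : Type*) [Field F] [CharP F 2] (a a' b' mu : F)
    (hb' : b' ≠ 0) (hmu : mu ≠ 0)
    (hhyp : QuadraticMap.Equivalent
      (((binQF F 1 a').prod (b' • binQF F 1 a')).prod
        (mu • ((binQF F 1 a').prod (b' • binQF F 1 a'))))
      (QuadraticMap.pi (fun _ : Fin 4 => binQF F 0 0))) :
    QuadraticMap.Equivalent
      ((binQF F 1 a).prod ((b' • binQF F 1 a').prod ((mu • binQF F 1 a').prod
        (((mu * b') • binQF F 1 a').prod (binQF F 1 (a + a'))))))
      (QuadraticMap.pi (fun _ : Fin 5 => binQF F 0 0)) :=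
  stmt13_general F a a' b' mu hhyp
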